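/- Let n ∈ {1,3}, α11, α22 ∈ (0,1], α12 ∈ (0,2], β11, β12, β22 > 0, s11, s12, s22 > 0, and consider J_n := inf over r > 0 (with p^{(n)}_{α12,β12,s12}(r) ≠ 0) of r^{α11+α22−2α12} · p^{(n)}_{α11,β11,s11}(r)·p^{(n)}_{α22,β22,s22}(r) / (p^{(n)}_{α12,β12,s12}(r))². If β12 < (β11 + β22)/2, then J_n = 0. -/

import Mathlib

/-!
As `r → ∞`, `p⁽ⁿ⁾_{α,β,s}(r)` decays exactly like a positive multiple of `r ^ (-(β + α))`:
in the variable `x = (s r) ^ α` it is a polynomial of degree `1` or `2` divided by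
`(1 + x) ^ (β / α + 1 + degree)`. Hence the quotient in the infimum behaves like a constant
times `r ^ (2 β₁₂ - β₁₁ - β₂₂)`, which tends to `0`. For `α ≤ 1` the functions `p⁽ⁿ⁾` are
nonnegative, so all the quotients are `≥ 0` and the infimum is `0`.
-/

open Set

noncomputable section

/-- The auxiliary functions `p⁽ⁿ⁾_{α,β,s}` for `n ∈ {1,3}`:
`p⁽¹⁾_{α,β,s}(r) = ((β+1)(sr)^α - α + 1) / (1+(sr)^α)^{β/α+2}` and
`p⁽³⁾_{α,β,s}(r) = ((β+1)(β+3)(sr)^{2α} + (sr)^α (4β+5-3α-3βα-α²) + (α-1)(α-3))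
  / (1+(sr)^α)^{β/α+3}`. -/
def pn (n : ℕ) (α β s r : ℝ) : ℝ :=
  if n = 1 then ((β + 1) * (s * r) ^ α - α + 1) / (1 + (s * r) ^ α) ^ (β / α + 2)
  else ((β + 1) * (β + 3) * (s * r) ^ (2 * α)
      + (s * r) ^ α * (4 * β + 5 - 3 * α - 3 * β * α - α ^ 2)
      + (α - 1) * (α - 3)) / (1 + (s * r) ^ α) ^ (β / α + 3)

open Filter Topology Real

theorem csInf_image_eq_of_tendsto {ι α : Type*} [ConditionallyCompleteLattice α]
    [TopologicalSpace α] [ClosedIciTopology α] {l : Filter ι} [l.NeBot] {f : ι → α}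
    {s : Set ι} {a : α} (hle : ∀ x ∈ s, a ≤ f x) (hs : ∀ᶠ x in l, x ∈ s)
    (hf : Tendsto f l (𝓝 a)) : sInf (f '' s) = a := by
  refine IsGLB.csInf_eq ⟨?_, fun b hb => ?_⟩ (Set.Nonempty.image f hs.exists)
  · rintro _ ⟨x, hx, rfl⟩
    exact hle x hx
  · exact ge_of_tendsto hf (hs.mono fun x hx => hb (mem_image_of_mem f hx))

theorem tendsto_rpow_mul_div_one_add_rpow {N : ℝ → ℝ} {L : ℝ} (γ : ℝ) (k : ℕ)
    (hN : Tendsto (fun x => N x / x ^ k) atTop (𝓝 L)) :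
    Tendsto (fun x => x ^ γ * N x / (1 + x) ^ (γ + k)) atTop (𝓝 L) := by
  have hden : Tendsto (fun x : ℝ => (x⁻¹ + 1) ^ (γ + k)) atTop (𝓝 1) := by
    simpa using (tendsto_inv_atTop_zero.add_const 1).rpow_const (p := γ + k) (Or.inl (by norm_num))
  refine (div_one L ▸ hN.div hden one_ne_zero).congr' ?_
  filter_upwards [eventually_gt_atTop 0] with x hx
  simp only [Pi.div_apply]
  rw [show 1 + x = x * (x⁻¹ + 1) by field_simp, mul_rpow hx.le (by positivity),
    rpow_add hx, rpow_natCast]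
  field_simp

theorem tendsto_rpow_mul_mul_div_sq_atTop_zero {f g h : ℝ → ℝ} {a b c e cf cg ch : ℝ}
    (hf : Tendsto (fun r => r ^ a * f r) atTop (𝓝 cf))
    (hg : Tendsto (fun r => r ^ b * g r) atTop (𝓝 cg))
    (hh : Tendsto (fun r => r ^ c * h r) atTop (𝓝 ch)) (hch : ch ≠ 0)
    (he : e < a + b - 2 * c) :
    Tendsto (fun r => r ^ e * (f r * g r) / h r ^ 2) atTop (𝓝 0) := by
  have hpow : Tendsto (fun r : ℝ => r ^ (e - (a + b - 2 * c))) atTop (𝓝 0) := by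
    simpa using tendsto_rpow_neg_atTop (y := a + b - 2 * c - e) (by linarith)
  refine (mul_zero (cf * cg / ch ^ 2) ▸
    ((hf.mul hg).div (hh.pow 2) (pow_ne_zero 2 hch)).mul hpow).congr' ?_
  filter_upwards [eventually_gt_atTop 0] with r hr
  have hrc : r ^ c ≠ 0 := (rpow_pos_of_pos hr c).ne'
  simp only [Pi.div_apply]
  rw [rpow_sub hr, rpow_sub hr, rpow_add hr, mul_comm 2 c, rpow_mul hr.le, rpow_two]
  field_simp

namespace pn

def numerator (n : ℕ) (α β x : ℝ) : ℝ :=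
  if n = 1 then (β + 1) * x - α + 1
  else (β + 1) * (β + 3) * x ^ 2 + x * (4 * β + 5 - 3 * α - 3 * β * α - α ^ 2)
    + (α - 1) * (α - 3)

def degree (n : ℕ) : ℕ := if n = 1 then 1 else 2

def leadingCoeff (n : ℕ) (β : ℝ) : ℝ := if n = 1 then β + 1 else (β + 1) * (β + 3)

variable {n : ℕ} {α β s r x : ℝ}

theorem eq_numerator_div (hsr : 0 ≤ s * r) :
    pn n α β s r = numerator n α β ((s * r) ^ α)
      / (1 + (s * r) ^ α) ^ (β / α + 1 + degree n) := by
  unfold pn numerator degree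
  split_ifs
  · norm_num [add_assoc, one_add_one_eq_two]
  · rw [mul_comm 2 α, rpow_mul hsr, rpow_two]
    norm_num [add_assoc]

theorem numerator_nonneg (hα₀ : 0 ≤ α) (hα₁ : α ≤ 1) (hβ : 0 ≤ β) (hx : 0 ≤ x) :
    0 ≤ numerator n α β x := by
  unfold numerator
  split_ifs
  · nlinarith
  · have hlin : 0 ≤ 4 * β + 5 - 3 * α - 3 * β * α - α ^ 2 := by nlinarith
    have hconst : 0 ≤ (α - 1) * (α - 3) := by nlinarith
    positivity

theorem tendsto_numerator_div_pow_degree :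
    Tendsto (fun x => numerator n α β x / x ^ degree n) atTop (𝓝 (leadingCoeff n β)) := by
  unfold numerator degree leadingCoeff
  have hinv : Tendsto (fun x : ℝ => x⁻¹) atTop (𝓝 0) := tendsto_inv_atTop_zero
  split_ifs
  · have hlim : Tendsto (fun x : ℝ => β + 1 + (1 - α) * x⁻¹) atTop (𝓝 (β + 1)) := by
      simpa using (hinv.const_mul (1 - α)).const_add (β + 1)
    refine hlim.congr' ?_
    filter_upwards [eventually_ne_atTop 0] with x hx
    field_simp
    ring
  · have hlim : Tendsto (fun x : ℝ => (β + 1) * (β + 3)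
        + ((4 * β + 5 - 3 * α - 3 * β * α - α ^ 2) * x⁻¹ + (α - 1) * (α - 3) * x⁻¹ ^ 2))
        atTop (𝓝 ((β + 1) * (β + 3))) := by
      simpa using ((hinv.const_mul (4 * β + 5 - 3 * α - 3 * β * α - α ^ 2)).add
        ((hinv.pow 2).const_mul ((α - 1) * (α - 3)))).const_add ((β + 1) * (β + 3))
    refine hlim.congr' ?_
    filter_upwards [eventually_ne_atTop 0] with x hx
    field_simp
    ring

theorem leadingCoeff_pos (hβ : -1 < β) : 0 < leadingCoeff n β := by
  unfold leadingCoeff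
  split_ifs <;> nlinarith

theorem nonneg (hα₀ : 0 ≤ α) (hα₁ : α ≤ 1) (hβ : 0 ≤ β) (hs : 0 ≤ s) (hr : 0 ≤ r) :
    0 ≤ pn n α β s r := by
  have hsr := mul_nonneg hs hr
  rw [eq_numerator_div hsr]
  have := numerator_nonneg (n := n) hα₀ hα₁ hβ (rpow_nonneg hsr α)
  positivity

theorem tendsto_rpow_mul (hα : 0 < α) (hs : 0 < s) :
    Tendsto (fun r => r ^ (β + α) * pn n α β s r) atTop
      (𝓝 (s ^ (-(β + α)) * leadingCoeff n β)) := by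
  have hx : Tendsto (fun r => (s * r) ^ α) atTop atTop :=
    (tendsto_rpow_atTop hα).comp (tendsto_id.const_mul_atTop hs)
  refine (((tendsto_rpow_mul_div_one_add_rpow (β / α + 1) (degree n)
    (tendsto_numerator_div_pow_degree (α := α))).comp hx).const_mul _).congr' ?_
  filter_upwards [eventually_gt_atTop 0] with r hr
  have hsr := mul_pos hs hr
  have hpow : r ^ (β + α) = s ^ (-(β + α)) * ((s * r) ^ α) ^ (β / α + 1) := by
    rw [← rpow_mul hsr.le, show α * (β / α + 1) = β + α by field_simp, mul_rpow hs.le hr.le,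
      rpow_neg hs.le]
    field_simp
  rw [Function.comp_apply, eq_numerator_div hsr.le, hpow, mul_assoc, mul_div_assoc]

end pn

theorem bivariate_generalized_cauchy_inf_zero_general
    (n : ℕ)
    (α11 α12 α22 β11 β12 β22 s11 s12 s22 : ℝ)
    (hα11 : α11 ∈ Ioc (0 : ℝ) 1) (hα22 : α22 ∈ Ioc (0 : ℝ) 1)
    (hα12 : α12 ∈ Ioc (0 : ℝ) 2)
    (hβ11 : 0 < β11) (hβ12 : 0 < β12) (hβ22 : 0 < β22)
    (hs11 : 0 < s11) (hs12 : 0 < s12) (hs22 : 0 < s22)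
    (hβ : β12 < (β11 + β22) / 2) :
    sInf ((fun r : ℝ =>
        r ^ (α11 + α22 - 2 * α12) *
          (pn n α11 β11 s11 r * pn n α22 β22 s22 r) / (pn n α12 β12 s12 r) ^ 2) ''
      {r : ℝ | 0 < r ∧ pn n α12 β12 s12 r ≠ 0}) = 0 := by
  have h12 := pn.tendsto_rpow_mul (n := n) (β := β12) hα12.1 hs12
  have hc12 : s12 ^ (-(β12 + α12)) * pn.leadingCoeff n β12 ≠ 0 :=
    (mul_pos (rpow_pos_of_pos hs12 _) (pn.leadingCoeff_pos (by linarith))).ne'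
  refine csInf_image_eq_of_tendsto (l := atTop) ?_ ?_
    (tendsto_rpow_mul_mul_div_sq_atTop_zero (pn.tendsto_rpow_mul hα11.1 hs11)
      (pn.tendsto_rpow_mul hα22.1 hs22) h12 hc12 (by linarith))
  · rintro r ⟨hr, -⟩
    have h11 := pn.nonneg (n := n) hα11.1.le hα11.2 hβ11.le hs11.le hr.le
    have h22 := pn.nonneg (n := n) hα22.1.le hα22.2 hβ22.le hs22.le hr.le
    positivity
  · filter_upwards [eventually_gt_atTop 0, h12.eventually_ne hc12] with r hr hne
    exact ⟨hr, right_ne_zero_of_mul hne⟩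

/-- If `β12 < (β11 + β22)/2`, then the infimum appearing in the sufficient condition for
the bivariate generalized Cauchy model is zero. -/
theorem bivariate_generalized_cauchy_inf_zero
    (n : ℕ) (hn : n = 1 ∨ n = 3)
    (α11 α12 α22 β11 β12 β22 s11 s12 s22 : ℝ)
    (hα11 : α11 ∈ Ioc (0 : ℝ) 1) (hα22 : α22 ∈ Ioc (0 : ℝ) 1)
    (hα12 : α12 ∈ Ioc (0 : ℝ) 2)
    (hβ11 : 0 < β11) (hβ12 : 0 < β12) (hβ22 : 0 < β22)
    (hs11 : 0 < s11) (hs12 : 0 < s12) (hs22 : 0 < s22)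
    (hβ : β12 < (β11 + β22) / 2) :
    sInf ((fun r : ℝ =>
        r ^ (α11 + α22 - 2 * α12) *
          (pn n α11 β11 s11 r * pn n α22 β22 s22 r) / (pn n α12 β12 s12 r) ^ 2) ''
      {r : ℝ | 0 < r ∧ pn n α12 β12 s12 r ≠ 0}) = 0 :=
  bivariate_generalized_cauchy_inf_zero_general n α11 α12 α22 β11 β12 β22 s11 s12 s22 hα11 hα22 hα12
    hβ11 hβ12 hβ22 hs11 hs12 hs22 hβ
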